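/- For every integer n ≥ 1: Σ_{l=0}^{2n} (−1)^{l} l |l − n| binom(2n, l) = (−1)^{n+1} · 2n · binom(2(n−1), n−1). -/
import Mathlib

open Finset

/-- Partial alternating sum `Σ_{l=0}^{k+1} (-1)^l (m+1-l) C(2m+2,l)` in closed form. -/
lemma key_sum (m : ℕ) : ∀ k : ℕ,
    ∑ l ∈ range (k + 2), (-1 : ℝ) ^ l * ((m : ℝ) + 1 - l) * (Nat.choose (2 * m + 2) l : ℝ)
      = (-1 : ℝ) ^ (k + 1) *
          (((m : ℝ) + 1) * (Nat.choose (2 * m + 1) (k + 1) : ℝ)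
            - 2 * ((m : ℝ) + 1) * (Nat.choose (2 * m) k : ℝ)) := by
  intro k
  induction k with
  | zero =>
    rw [Finset.sum_range_succ, Finset.sum_range_one]
    have h1 : Nat.choose (2 * m + 2) 1 = 2 * m + 2 := Nat.choose_one_right _
    have h2 : Nat.choose (2 * m + 1) 1 = 2 * m + 1 := Nat.choose_one_right _
    rw [h1, h2]
    simp only [Nat.choose_zero_right]
    push_cast
    ring
  | succ k ih =>
    rw [Finset.sum_range_succ, ih]
    have hA : ((2 * m + 2).choose (k + 2) : ℝ)
        = ((2 * m + 1).choose (k + 1) : ℝ) + ((2 * m + 1).choose (k + 2) : ℝ) := by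
      rw [← Nat.cast_add, ← Nat.choose_succ_succ]
    have hB : ((2 * m + 1).choose (k + 1) : ℝ)
        = ((2 * m).choose k : ℝ) + ((2 * m).choose (k + 1) : ℝ) := by
      rw [← Nat.cast_add, ← Nat.choose_succ_succ]
    have hC : ((2 * m + 2 : ℕ) : ℝ) * ((2 * m + 1).choose (k + 1) : ℝ)
        = ((2 * m + 2).choose (k + 2) : ℝ) * ((k + 2 : ℕ) : ℝ) := by
      rw [← Nat.cast_mul, ← Nat.cast_mul, Nat.add_one_mul_choose_eq]
    push_cast at hC
    rw [pow_succ, pow_succ]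
    push_cast
    linear_combination ((-1 : ℝ) ^ k * ((m : ℝ) + 1)) * hA
      - (2 * ((m : ℝ) + 1) * (-1 : ℝ) ^ k) * hB + (-1 : ℝ) ^ k * hC

/-- `Σ_{l=0}^{m} (-1)^l (m+1-l) C(2m+2,l) = (-1)^m C(2m,m)` for `m ≥ 1`. -/
lemma key_sum' (m : ℕ) (hm : 1 ≤ m) :
    ∑ l ∈ range (m + 1), (-1 : ℝ) ^ l * ((m : ℝ) + 1 - l) * (Nat.choose (2 * m + 2) l : ℝ)
      = (-1 : ℝ) ^ m * (Nat.choose (2 * m) m : ℝ) := by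
  obtain ⟨k, rfl⟩ : ∃ k, m = k + 1 := ⟨m - 1, by omega⟩
  have h := key_sum (k + 1) k
  rw [show k + 1 + 1 = k + 2 from rfl, h]
  have hA : ((2 * (k + 1) + 1).choose (k + 1) : ℝ)
      = ((2 * (k + 1)).choose k : ℝ) + ((2 * (k + 1)).choose (k + 1) : ℝ) := by
    rw [← Nat.cast_add, ← Nat.choose_succ_succ]
  have hC : ((2 * (k + 1)).choose (k + 1) : ℝ) * ((k + 1 : ℕ) : ℝ)
      = ((2 * (k + 1)).choose k : ℝ) * ((2 * (k + 1) - k : ℕ) : ℝ) := by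
    rw [← Nat.cast_mul, ← Nat.cast_mul, Nat.choose_succ_right_eq]
  have hsub : (2 * (k + 1) - k : ℕ) = k + 2 := by omega
  rw [hsub] at hC
  push_cast at hA hC ⊢
  linear_combination ((-1 : ℝ) ^ (k + 1) * ((k : ℝ) + 2)) * hA + (-1 : ℝ) ^ (k + 1) * hC

lemma stmt16_aux (m : ℕ) (hm : 1 ≤ m) :
    ∑ l ∈ range (2 * m + 3),
        (-1 : ℝ) ^ l * (l : ℝ) * |(l : ℝ) - ((m : ℝ) + 1)| * (Nat.choose (2 * m + 2) l : ℝ)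
      = (-1 : ℝ) ^ m * (2 * (m : ℝ) + 2) * (Nat.choose (2 * m) m : ℝ) := by
  set f : ℕ → ℝ := fun l =>
    (-1 : ℝ) ^ l * (l : ℝ) * |(l : ℝ) - ((m : ℝ) + 1)| * (Nat.choose (2 * m + 2) l : ℝ) with hf
  set g : ℕ → ℝ := fun j =>
    (-1 : ℝ) ^ j * (2 * (m : ℝ) + 2 - j) * (((m : ℝ) + 1) - j) * (Nat.choose (2 * m + 2) j : ℝ)
    with hg
  have hsplit : ∑ l ∈ range (2 * m + 3), f l
      = (∑ l ∈ Finset.Ico 0 (m + 2), f l) + ∑ l ∈ Finset.Ico (m + 2) (2 * m + 3), f l := by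
    rw [Finset.range_eq_Ico,
      Finset.sum_Ico_consecutive f (show 0 ≤ m + 2 by omega) (show m + 2 ≤ 2 * m + 3 by omega)]
  -- lower part
  have h1 : ∑ l ∈ Finset.Ico 0 (m + 2), f l
      = ∑ l ∈ range (m + 1),
          (-1 : ℝ) ^ l * (l : ℝ) * (((m : ℝ) + 1) - l) * (Nat.choose (2 * m + 2) l : ℝ) := by
    rw [← Finset.range_eq_Ico]
    have habs : ∀ l ∈ range (m + 2), f l
        = (-1 : ℝ) ^ l * (l : ℝ) * (((m : ℝ) + 1) - l) * (Nat.choose (2 * m + 2) l : ℝ) := by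
      intro l hl
      have hl' : l ≤ m + 1 := by
        have := Finset.mem_range.mp hl; omega
      have hle : (l : ℝ) ≤ (m : ℝ) + 1 := by exact_mod_cast hl'
      simp only [hf]
      rw [abs_of_nonpos (by linarith), neg_sub]
    rw [Finset.sum_congr rfl habs,
      show m + 2 = (m + 1) + 1 from rfl, Finset.sum_range_succ]
    have hz : ((m : ℝ) + 1) - ((m + 1 : ℕ) : ℝ) = 0 := by push_cast; ring
    rw [hz, mul_zero, zero_mul, add_zero]
  -- upper part
  have h2 : ∑ l ∈ Finset.Ico (m + 2) (2 * m + 3), f l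
      = ∑ j ∈ range (m + 1), g j := by
    have hcg : ∀ l ∈ Finset.Ico (m + 2) (2 * m + 3), f l = g (2 * m + 2 - l) := by
      intro l hl
      obtain ⟨hl1, hl2⟩ := Finset.mem_Ico.mp hl
      have hl3 : l ≤ 2 * m + 2 := by omega
      have hcast : ((2 * m + 2 - l : ℕ) : ℝ) = 2 * (m : ℝ) + 2 - l := by
        push_cast [hl3]; ring
      have hpow : (-1 : ℝ) ^ (2 * m + 2 - l) = (-1 : ℝ) ^ l := by
        rcases Nat.even_or_odd l with h | h
        · obtain ⟨c, hc⟩ := h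
          have he : Even (2 * m + 2 - l) := ⟨m + 1 - c, by omega⟩
          rw [he.neg_one_pow, Even.neg_one_pow ⟨c, hc⟩]
        · obtain ⟨c, hc⟩ := h
          have ho : Odd (2 * m + 2 - l) := ⟨m - c, by omega⟩
          rw [ho.neg_one_pow, Odd.neg_one_pow ⟨c, hc⟩]
      have hch : (2 * m + 2).choose (2 * m + 2 - l) = (2 * m + 2).choose l :=
        Nat.choose_symm hl3
      have hge : ((m : ℝ) + 1) ≤ (l : ℝ) := by
        have : (m + 1 : ℕ) ≤ l := by omega
        exact_mod_cast this
      simp only [hf, hg]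
      rw [hpow, hch, hcast, abs_of_nonneg (by linarith)]
      ring
    rw [Finset.sum_congr rfl hcg]
    have hrefl := Finset.sum_Ico_reflect g (m + 2)
      (show 2 * m + 3 ≤ 2 * m + 2 + 1 by omega)
    have e1 : 2 * m + 2 + 1 - (2 * m + 3) = 0 := by omega
    have e2 : 2 * m + 2 + 1 - (m + 2) = m + 1 := by omega
    rw [e1, e2] at hrefl
    rw [hrefl, ← Finset.range_eq_Ico]
  rw [hsplit, h1, h2, ← Finset.sum_add_distrib]
  have hcomb : ∀ l ∈ range (m + 1),
      (-1 : ℝ) ^ l * (l : ℝ) * (((m : ℝ) + 1) - l) * (Nat.choose (2 * m + 2) l : ℝ) + g l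
        = (2 * (m : ℝ) + 2) *
            ((-1 : ℝ) ^ l * (((m : ℝ) + 1) - l) * (Nat.choose (2 * m + 2) l : ℝ)) := by
    intro l _
    simp only [hg]
    ring
  rw [Finset.sum_congr rfl hcomb, ← Finset.mul_sum, key_sum' m hm]
  ring

/-- `Σ_{l=0}^{2n} (-1)^l l |l-n| binom(2n,l) = (-1)^{n+1} 2n binom(2(n-1),n-1)`. -/
theorem stmt_16 (n : ℕ) (hn : 1 ≤ n) :
    ∑ l ∈ Finset.range (2 * n + 1),
        (-1 : ℝ) ^ l * (l : ℝ) * |(l : ℝ) - (n : ℝ)| * (Nat.choose (2 * n) l : ℝ)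
      = (-1 : ℝ) ^ (n + 1) * (2 * (n : ℝ)) * (Nat.choose (2 * (n - 1)) (n - 1) : ℝ) := by
  obtain ⟨m, rfl⟩ : ∃ m, n = m + 1 := ⟨n - 1, by omega⟩
  rcases Nat.eq_zero_or_pos m with rfl | hm
  · norm_num [Finset.sum_range_succ]
  · have h := stmt16_aux m hm
    rw [show 2 * (m + 1) + 1 = 2 * m + 3 by ring, show 2 * (m + 1) = 2 * m + 2 by ring,
      show m + 1 - 1 = m from rfl]
    push_cast
    rw [h, pow_succ, pow_succ]
    ring
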